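/- arXiv:2108.05213 — 3 statements merged into one kernel-verified Lean document; each statement's English description precedes it below -/
import Mathlib

section
/- Let n ≥ 1, let d > 0 be a constant, let D : ℝⁿ → ℝ be smooth with D(x) > 0 for all x, and let u : ℝⁿ → ℝⁿ be smooth and compactly supported. Then ∫_{ℝⁿ} ⟨u(x), D(x) u(x) − (d²/12) D(x) ∇( D⁻¹ div(D u) )(x)⟩ dx = ∫_{ℝⁿ} ( D(x)‖u(x)‖² + (d²/12) (div(Du)(x))² / D(x) ) dx. -/
set_option maxHeartbeats 1000000


open MeasureTheory

/-- `i`-th spatial partial derivative of a scalar function on `ℝⁿ`. -/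
noncomputable def pd {n : ℕ} (f : EuclideanSpace ℝ (Fin n) → ℝ) (i : Fin n)
    (x : EuclideanSpace ℝ (Fin n)) : ℝ :=
  fderiv ℝ f x (EuclideanSpace.single i 1)

/-- Divergence of a vector field on `ℝⁿ`. -/
noncomputable def sdiv {n : ℕ} (u : EuclideanSpace ℝ (Fin n) → EuclideanSpace ℝ (Fin n))
    (x : EuclideanSpace ℝ (Fin n)) : ℝ :=
  ∑ i, pd (fun y => u y i) i x

/-- Gradient of a scalar function on `ℝⁿ`. -/
noncomputable def sgrad {n : ℕ} (f : EuclideanSpace ℝ (Fin n) → ℝ)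
    (x : EuclideanSpace ℝ (Fin n)) : EuclideanSpace ℝ (Fin n) :=
  WithLp.toLp 2 (fun i => pd f i x)

lemma pd_contDiff {n : ℕ} {f : EuclideanSpace ℝ (Fin n) → ℝ} (hf : ContDiff ℝ (⊤ : ℕ∞) f) (i : Fin n) :
    ContDiff ℝ (⊤ : ℕ∞) (pd f i) :=
  (hf.fderiv_right (by simp)).clm_apply contDiff_const

lemma pd_compactSupport {n : ℕ} {f : EuclideanSpace ℝ (Fin n) → ℝ} (hf : HasCompactSupport f)
    (i : Fin n) : HasCompactSupport (pd f i) :=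
  hf.fderiv_apply ℝ _

lemma sum_compactSupport {E : Type*} [TopologicalSpace E] (m : ℕ) (f : Fin m → E → ℝ)
    (hf : ∀ i, HasCompactSupport (f i)) : HasCompactSupport (fun x => ∑ i, f i x) := by
  have : (fun x => ∑ i, f i x) = ∑ i, f i := by funext x; simp
  rw [this]
  apply Finset.sum_induction f HasCompactSupport (fun a b ha hb => ha.add hb)
  · simp only [HasCompactSupport, tsupport]; simpa using isCompact_empty
  · exact fun i _ => hf i

lemma sdiv_compactSupport {n : ℕ} {w : EuclideanSpace ℝ (Fin n) → EuclideanSpace ℝ (Fin n)}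
    (hw : HasCompactSupport w) : HasCompactSupport (sdiv w) := by
  apply sum_compactSupport n (fun i => pd (fun y => w y i) i)
  intro i
  apply pd_compactSupport
  have : (fun y => w y i) = (fun (v : EuclideanSpace ℝ (Fin n)) => v i) ∘ w := rfl
  rw [this]
  exact hw.comp_left rfl

/-- The depth-dependent operator `Q_op(D)u = D u - (d²/12) D ∇(D⁻¹ div(Du))` of the
single-layer √D model satisfies
`∫ ⟨u, Q_op(D)u⟩ = ∫ ( D‖u‖² + (d²/12)(div(Du))²/D )`. -/
theorem stmt1 (n : ℕ) (hn : 1 ≤ n) (d : ℝ) (hd : 0 < d)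
    (D : EuclideanSpace ℝ (Fin n) → ℝ) (hD : ContDiff ℝ (⊤ : ℕ∞) D) (hDpos : ∀ x, 0 < D x)
    (u : EuclideanSpace ℝ (Fin n) → EuclideanSpace ℝ (Fin n))
    (hu : ContDiff ℝ (⊤ : ℕ∞) u) (hcs : HasCompactSupport u) :
    ∫ x, (inner ℝ (u x)
        (D x • u x - (d ^ 2 / 12) •
          (D x • sgrad (fun y => (D y)⁻¹ * sdiv (fun z => D z • u z) y) x)) : ℝ) =
      ∫ x, (D x * ‖u x‖ ^ 2 + (d ^ 2 / 12) * (sdiv (fun z => D z • u z) x) ^ 2 / D x) := by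
  set c : ℝ := d ^ 2 / 12 with hc
  set Du : EuclideanSpace ℝ (Fin n) → EuclideanSpace ℝ (Fin n) := fun z => D z • u z with hDu_def
  set φ : EuclideanSpace ℝ (Fin n) → ℝ := fun y => (D y)⁻¹ * sdiv Du y with hφ_def
  have hDne : ∀ x, D x ≠ 0 := fun x => (hDpos x).ne'
  -- smoothness facts
  have hDu : ContDiff ℝ (⊤ : ℕ∞) Du := hD.smul hu
  have hDui : ∀ i, ContDiff ℝ (⊤ : ℕ∞) (fun y => Du y i) := fun i =>
    (EuclideanSpace.proj i : EuclideanSpace ℝ (Fin n) →L[ℝ] ℝ).contDiff.comp hDu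
  have hsdiv : ContDiff ℝ (⊤ : ℕ∞) (sdiv Du) := by
    have : sdiv Du = fun x => ∑ i, pd (fun y => Du y i) i x := rfl
    rw [this]
    exact ContDiff.sum fun i _ => pd_contDiff (hDui i) i
  have hφ : ContDiff ℝ (⊤ : ℕ∞) φ := (hD.inv hDne).mul hsdiv
  -- support facts
  have hcsDu : HasCompactSupport Du := hcs.smul_left (f := D)
  have hcsDui : ∀ i, HasCompactSupport (fun y => Du y i) := by
    intro i
    have : (fun y => Du y i) = (fun (v : EuclideanSpace ℝ (Fin n)) => v i) ∘ Du := rfl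
    rw [this]
    exact hcsDu.comp_left rfl
  have hcs_pd : ∀ i, HasCompactSupport (pd (fun y => Du y i) i) := fun i =>
    pd_compactSupport (hcsDui i) i
  have hcs_sdiv : HasCompactSupport (sdiv Du) := sdiv_compactSupport hcsDu
  -- integrability facts
  have intA : Integrable (fun x => D x * ‖u x‖ ^ 2) := by
    apply Continuous.integrable_of_hasCompactSupport
      (hD.continuous.mul ((hu.continuous.norm).pow 2))
    have h0 : HasCompactSupport (fun x => ‖u x‖ ^ 2) := by
      have : (fun x => ‖u x‖ ^ 2) = (fun (v : EuclideanSpace ℝ (Fin n)) => ‖v‖ ^ 2) ∘ u := rfl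
      rw [this]; exact hcs.comp_left (by simp)
    have h2 : (fun x => D x * ‖u x‖ ^ 2) = (fun x => ‖u x‖ ^ 2) * fun x => D x := by
      funext x; simp [mul_comm]
    rw [show D * (fun x => ‖u x‖) ^ 2 = _ from h2]
    exact h0.mul_right
  have intBi : ∀ i, Integrable (fun x => Du x i * pd φ i x) := by
    intro i
    exact Continuous.integrable_of_hasCompactSupport
      ((hDui i).continuous.mul (pd_contDiff hφ i).continuous) ((hcsDui i).mul_right)
  have intfg : ∀ i, Integrable (fun x => Du x i * φ x) := fun i =>
    Continuous.integrable_of_hasCompactSupport ((hDui i).continuous.mul hφ.continuous)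
      ((hcsDui i).mul_right)
  have intf'g : ∀ i, Integrable (fun x => pd (fun y => Du y i) i x * φ x) := fun i =>
    Continuous.integrable_of_hasCompactSupport
      ((pd_contDiff (hDui i) i).continuous.mul hφ.continuous) ((hcs_pd i).mul_right)
  have int_sdφ : Integrable (fun x => sdiv Du x * φ x) :=
    Continuous.integrable_of_hasCompactSupport (hsdiv.continuous.mul hφ.continuous)
      hcs_sdiv.mul_right
  -- per-coordinate integration by parts
  have key : ∀ i, ∫ x, Du x i * pd φ i x = - ∫ x, pd (fun y => Du y i) i x * φ x := by
    intro i
    exact integral_mul_fderiv_eq_neg_fderiv_mul_of_integrable (intf'g i) (intBi i) (intfg i)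
      (fun x _ => (hDui i).differentiable (by simp) x) (fun x _ => hφ.differentiable (by simp) x)
  -- pointwise identity for the left integrand
  have hB : ∀ x, (inner ℝ (u x) (D x • u x - c • (D x • sgrad φ x)) : ℝ)
      = D x * ‖u x‖ ^ 2 - c * ∑ i, Du x i * pd φ i x := by
    intro x
    have hnorm : ‖u x‖ ^ 2 = ∑ i, u x i * u x i := by
      rw [EuclideanSpace.real_norm_sq_eq]
      simp [sq]
    simp only [PiLp.inner_apply, RCLike.inner_apply, starRingEnd_apply, star_trivial,
      PiLp.sub_apply, PiLp.smul_apply, smul_eq_mul, hnorm, sgrad]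
    rw [Finset.mul_sum, Finset.mul_sum, ← Finset.sum_sub_distrib]
    apply Finset.sum_congr rfl
    intro i _
    simp only [hDu_def, PiLp.smul_apply, smul_eq_mul]
    ring
  -- sum of the integration-by-parts identities
  have hsum : ∑ i, ∫ x, Du x i * pd φ i x = - ∫ x, sdiv Du x * φ x := by
    calc ∑ i, ∫ x, Du x i * pd φ i x
        = ∑ i, -∫ x, pd (fun y => Du y i) i x * φ x :=
          Finset.sum_congr rfl fun i _ => key i
      _ = -∑ i, ∫ x, pd (fun y => Du y i) i x * φ x := by
          rw [Finset.sum_neg_distrib]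
      _ = -∫ x, ∑ i, pd (fun y => Du y i) i x * φ x := by
          rw [integral_finset_sum _ fun i _ => intf'g i]
      _ = -∫ x, sdiv Du x * φ x := by
          congr 1
          apply integral_congr_ae
          filter_upwards with x
          simp [sdiv, Finset.sum_mul]
  -- assemble
  have intB : Integrable (fun x => ∑ i, Du x i * pd φ i x) :=
    integrable_finset_sum _ fun i _ => intBi i
  calc ∫ x, (inner ℝ (u x) (D x • u x - c • (D x • sgrad φ x)) : ℝ)
      = ∫ x, (D x * ‖u x‖ ^ 2 - c * ∑ i, Du x i * pd φ i x) :=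
        integral_congr_ae (Filter.Eventually.of_forall hB)
    _ = (∫ x, D x * ‖u x‖ ^ 2) - c * ∫ x, ∑ i, Du x i * pd φ i x := by
        rw [integral_sub intA (intB.const_mul c), integral_const_mul]
    _ = (∫ x, D x * ‖u x‖ ^ 2) - c * ∑ i, ∫ x, Du x i * pd φ i x := by
        rw [integral_finset_sum _ fun i _ => intBi i]
    _ = (∫ x, D x * ‖u x‖ ^ 2) + c * ∫ x, sdiv Du x * φ x := by
        rw [hsum]; ring
    _ = ∫ x, (D x * ‖u x‖ ^ 2 + c * (sdiv Du x * φ x)) := by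
        rw [integral_add intA (int_sdφ.const_mul c), integral_const_mul]
    _ = ∫ x, (D x * ‖u x‖ ^ 2 + c * (sdiv Du x) ^ 2 / D x) := by
        apply integral_congr_ae
        filter_upwards with x
        congr 1
        simp only [hφ_def]
        field_simp
end

section
/- Let n ≥ 1 and let u, v : ℝ × ℝⁿ → ℝⁿ and ψ : ℝ × ℝⁿ → ℝ be smooth, satisfying for all (t,x) the one-form evolution equation ∂_t v + (u·∇)v + (Ju)ᵀ v = ∇ψ, where (u·∇)v is the directional spatial derivative of v along u, (Ju)ᵀv has i-th component ∑_j v_j ∂u_j/∂x_i, and ∇ψ is the spatial gradient. Let γ : ℝ × ℝ → ℝⁿ be smooth with γ(t, s+2π) = γ(t,s) for all (t,s) and ∂_t γ(t,s) = u(t, γ(t,s)). Then the circulation C(t) = ∫₀^{2π} ⟨ v(t, γ(t,s)), ∂_s γ(t,s) ⟩ ds is constant in t. -/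
open MeasureTheory

/-- Time derivative `∂ₜv` of a time-dependent vector field. -/
noncomputable def tdV {n : ℕ} (v : ℝ × EuclideanSpace ℝ (Fin n) → EuclideanSpace ℝ (Fin n))
    (t : ℝ) (x : EuclideanSpace ℝ (Fin n)) : EuclideanSpace ℝ (Fin n) :=
  WithLp.toLp 2 (fun i => deriv (fun τ => v (τ, x) i) t)

/-- Directional spatial derivative `(u·∇)v` of a time-dependent vector field. -/
noncomputable def advV {n : ℕ} (u v : ℝ × EuclideanSpace ℝ (Fin n) → EuclideanSpace ℝ (Fin n))
    (t : ℝ) (x : EuclideanSpace ℝ (Fin n)) : EuclideanSpace ℝ (Fin n) :=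
  WithLp.toLp 2 (fun i => fderiv ℝ (fun y => v (t, y) i) x (u (t, x)))

/-- `(Ju)ᵀ v`, with `i`-th component `∑ⱼ vⱼ ∂uⱼ/∂xᵢ`. -/
noncomputable def jacT {n : ℕ} (u v : ℝ × EuclideanSpace ℝ (Fin n) → EuclideanSpace ℝ (Fin n))
    (t : ℝ) (x : EuclideanSpace ℝ (Fin n)) : EuclideanSpace ℝ (Fin n) :=
  WithLp.toLp 2 (fun i => ∑ j, v (t, x) j * pd (fun y => u (t, y) j) i x)

/-- Derivative `∂ₜγ` of a time-dependent loop with respect to time. -/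
noncomputable def tdLoop {n : ℕ} (γ : ℝ × ℝ → EuclideanSpace ℝ (Fin n)) (t s : ℝ) :
    EuclideanSpace ℝ (Fin n) :=
  WithLp.toLp 2 (fun i => deriv (fun τ => γ (τ, s) i) t)

/-- Derivative `∂ₛγ` of a time-dependent loop with respect to its parameter. -/
noncomputable def sdLoop {n : ℕ} (γ : ℝ × ℝ → EuclideanSpace ℝ (Fin n)) (t s : ℝ) :
    EuclideanSpace ℝ (Fin n) :=
  WithLp.toLp 2 (fun i => deriv (fun σ => γ (t, σ) i) s)

section KelvinAux

variable {n : ℕ}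

lemma hasDerivAt_slice_fst {F : Type*} [NormedAddCommGroup F] [NormedSpace ℝ F]
    {h : ℝ × ℝ → F} (hh : Differentiable ℝ h) (t s : ℝ) :
    HasDerivAt (fun τ => h (τ, s)) (fderiv ℝ h (t, s) (1, 0)) t := by
  have h1 : HasDerivAt (fun τ : ℝ => ((τ, s) : ℝ × ℝ)) ((1 : ℝ), (0 : ℝ)) t :=
    (hasDerivAt_id t).prodMk (hasDerivAt_const t s)
  exact (hh (t, s)).hasFDerivAt.comp_hasDerivAt t h1

lemma hasDerivAt_slice_snd {F : Type*} [NormedAddCommGroup F] [NormedSpace ℝ F]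
    {h : ℝ × ℝ → F} (hh : Differentiable ℝ h) (t s : ℝ) :
    HasDerivAt (fun σ => h (t, σ)) (fderiv ℝ h (t, s) (0, 1)) s := by
  have h1 : HasDerivAt (fun σ : ℝ => ((t, σ) : ℝ × ℝ)) ((0 : ℝ), (1 : ℝ)) s :=
    (hasDerivAt_const s t).prodMk (hasDerivAt_id s)
  exact (hh (t, s)).hasFDerivAt.comp_hasDerivAt s h1

lemma hasDerivAt_slice_time {F : Type*} [NormedAddCommGroup F] [NormedSpace ℝ F]
    {g : ℝ × EuclideanSpace ℝ (Fin n) → F} (hg : Differentiable ℝ g) (t : ℝ)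
    (x : EuclideanSpace ℝ (Fin n)) :
    HasDerivAt (fun τ => g (τ, x)) (fderiv ℝ g (t, x) (1, 0)) t := by
  have h1 : HasDerivAt (fun τ : ℝ => ((τ, x) : ℝ × EuclideanSpace ℝ (Fin n)))
      ((1 : ℝ), (0 : EuclideanSpace ℝ (Fin n))) t :=
    (hasDerivAt_id t).prodMk (hasDerivAt_const t x)
  exact (hg (t, x)).hasFDerivAt.comp_hasDerivAt t h1

lemma fderiv_slice_space {F : Type*} [NormedAddCommGroup F] [NormedSpace ℝ F]
    {g : ℝ × EuclideanSpace ℝ (Fin n) → F} (hg : Differentiable ℝ g) (t : ℝ)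
    (x w : EuclideanSpace ℝ (Fin n)) :
    fderiv ℝ (fun y => g (t, y)) x w = fderiv ℝ g (t, x) (0, w) := by
  have h1 : HasFDerivAt
      (fun y : EuclideanSpace ℝ (Fin n) => ((t, y) : ℝ × EuclideanSpace ℝ (Fin n)))
      (((0 : EuclideanSpace ℝ (Fin n) →L[ℝ] ℝ)).prod (ContinuousLinearMap.id ℝ _)) x :=
    (hasFDerivAt_const t x).prodMk (hasFDerivAt_id x)
  have h2 := ((hg (t, x)).hasFDerivAt.comp x h1).fderiv
  show (fderiv ℝ (g ∘ Prod.mk t) x) w = _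
  rw [h2]; rfl

lemma euclid_sum_single (w : EuclideanSpace ℝ (Fin n)) :
    w = ∑ i, w i • EuclideanSpace.single i (1:ℝ) := by
  have := (EuclideanSpace.basisFun (Fin n) ℝ).sum_repr w
  simp only [EuclideanSpace.basisFun_repr, EuclideanSpace.basisFun_apply] at this
  exact this.symm

lemma clm_sum_single (L : (ℝ × EuclideanSpace ℝ (Fin n)) →L[ℝ] ℝ)
    (w : EuclideanSpace ℝ (Fin n)) :
    ∑ i, L (0, EuclideanSpace.single i 1) * w i = L (0, w) := by
  have hL : ∀ z : EuclideanSpace ℝ (Fin n),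
      L (0, z) = (L.comp (ContinuousLinearMap.inr ℝ ℝ (EuclideanSpace ℝ (Fin n)))) z :=
    fun z => rfl
  simp only [hL]
  conv_rhs => rw [euclid_sum_single w]
  rw [map_sum]
  simp [mul_comm]

lemma sdLoop_eq {γ : ℝ × ℝ → EuclideanSpace ℝ (Fin n)} (hγ : ContDiff ℝ (⊤ : ℕ∞) γ) (t s : ℝ) :
    sdLoop γ t s = fderiv ℝ γ (t, s) (0, 1) := by
  ext i
  have h0 := hasDerivAt_slice_snd (hγ.differentiable (by simp)) t s
  have h1 := ((EuclideanSpace.proj (𝕜 := ℝ) i).hasFDerivAt).comp_hasDerivAt s h0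
  show deriv (fun σ => γ (t, σ) i) s = _
  exact h1.deriv

lemma tdLoop_eq {γ : ℝ × ℝ → EuclideanSpace ℝ (Fin n)} (hγ : ContDiff ℝ (⊤ : ℕ∞) γ) (t s : ℝ) :
    tdLoop γ t s = fderiv ℝ γ (t, s) (1, 0) := by
  ext i
  have h0 := hasDerivAt_slice_fst (hγ.differentiable (by simp)) t s
  have h1 := ((EuclideanSpace.proj (𝕜 := ℝ) i).hasFDerivAt).comp_hasDerivAt t h0
  show deriv (fun τ => γ (τ, s) i) t = _
  exact h1.deriv

lemma kelvin_pointwise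
    (u v : ℝ × EuclideanSpace ℝ (Fin n) → EuclideanSpace ℝ (Fin n))
    (ψ : ℝ × EuclideanSpace ℝ (Fin n) → ℝ)
    (hu : ContDiff ℝ (⊤ : ℕ∞) u) (hv : ContDiff ℝ (⊤ : ℕ∞) v) (hψ : ContDiff ℝ (⊤ : ℕ∞) ψ)
    (heq : ∀ (t : ℝ) (x : EuclideanSpace ℝ (Fin n)),
      tdV v t x + advV u v t x + jacT u v t x = sgrad (fun y => ψ (t, y)) x)
    (γ : ℝ × ℝ → EuclideanSpace ℝ (Fin n)) (hγ : ContDiff ℝ (⊤ : ℕ∞) γ)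
    (hflow : ∀ t s, tdLoop γ t s = u (t, γ (t, s))) (t s : ℝ) :
    HasDerivAt (fun τ => (inner ℝ (v (τ, γ (τ, s))) (sdLoop γ τ s) : ℝ))
      (fderiv ℝ ψ (t, γ (t, s)) (0, fderiv ℝ γ (t, s) (0, 1))) t := by
  have hγd : Differentiable ℝ γ := hγ.differentiable (by simp)
  have hud : Differentiable ℝ u := hu.differentiable (by simp)
  have hvd : Differentiable ℝ v := hv.differentiable (by simp)
  have hψd : Differentiable ℝ ψ := hψ.differentiable (by simp)
  have hvi : ∀ i : Fin n, Differentiable ℝ (fun p => v p i) := fun i =>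
    (EuclideanSpace.proj (𝕜 := ℝ) i).differentiable.comp hvd
  have huj : ∀ j : Fin n, Differentiable ℝ (fun p => u p j) := fun j =>
    (EuclideanSpace.proj (𝕜 := ℝ) j).differentiable.comp hud
  have htd : ∀ t s : ℝ, fderiv ℝ γ (t, s) (1, 0) = u (t, γ (t, s)) := fun t s => by
    rw [← tdLoop_eq hγ, hflow]
  have hrw : (fun τ => (inner ℝ (v (τ, γ (τ, s))) (sdLoop γ τ s) : ℝ)) =
      fun τ => ∑ i, v (τ, γ (τ, s)) i * fderiv ℝ γ (τ, s) (0, 1) i := by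
    funext τ
    rw [sdLoop_eq hγ]
    simp [PiLp.inner_apply, RCLike.inner_apply, conj_trivial, mul_comm]
  rw [hrw]
  -- derivative of the base curve
  have hΓt : HasDerivAt (fun τ => ((τ, γ (τ, s)) : ℝ × EuclideanSpace ℝ (Fin n)))
      ((1 : ℝ), u (t, γ (t, s))) t := by
    have := (hasDerivAt_id t).prodMk (hasDerivAt_slice_fst hγd t s)
    rwa [htd t s] at this
  have hΓs : HasDerivAt (fun σ => ((t, γ (t, σ)) : ℝ × EuclideanSpace ℝ (Fin n)))
      ((0 : ℝ), fderiv ℝ γ (t, s) (0, 1)) s :=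
    (hasDerivAt_const s t).prodMk (hasDerivAt_slice_snd hγd t s)
  -- derivative of each component of v along the flow
  have hA : ∀ i : Fin n, HasDerivAt (fun τ => v (τ, γ (τ, s)) i)
      (fderiv ℝ (fun p => v p i) (t, γ (t, s)) (1, u (t, γ (t, s)))) t := fun i =>
    ((hvi i) _).hasFDerivAt.comp_hasDerivAt t hΓt
  -- derivative of each component of ∂ₛγ in time
  have hΦ : ContDiff ℝ (⊤ : ℕ∞) (fderiv ℝ γ) := hγ.fderiv_right (by simp)
  have hΦd : Differentiable ℝ (fderiv ℝ γ) := hΦ.differentiable (by simp)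
  have hB : ∀ i : Fin n, HasDerivAt (fun τ => fderiv ℝ γ (τ, s) (0, 1) i)
      ((fderiv ℝ (fderiv ℝ γ) (t, s) (1, 0)) (0, 1) i) t := fun i => by
    have h0 := hasDerivAt_slice_fst hΦd t s
    exact (((EuclideanSpace.proj (𝕜 := ℝ) i).comp
      (ContinuousLinearMap.apply ℝ (EuclideanSpace ℝ (Fin n))
        (((0 : ℝ), (1 : ℝ)) : ℝ × ℝ))).hasFDerivAt).comp_hasDerivAt t h0
  -- product rule
  have hprod : HasDerivAt (fun τ => ∑ i, v (τ, γ (τ, s)) i * fderiv ℝ γ (τ, s) (0, 1) i)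
      (∑ i, (fderiv ℝ (fun p => v p i) (t, γ (t, s)) (1, u (t, γ (t, s)))
          * fderiv ℝ γ (t, s) (0, 1) i
        + v (t, γ (t, s)) i * (fderiv ℝ (fderiv ℝ γ) (t, s) (1, 0)) (0, 1) i)) t :=
    HasDerivAt.fun_sum fun i _ => (hA i).mul (hB i)
  -- symmetry of second derivatives
  have hsym := second_derivative_symmetric (f := γ) (fun y => (hγd y).hasFDerivAt)
      ((hΦd (t, s)).hasFDerivAt) (((0 : ℝ), (1 : ℝ)) : ℝ × ℝ) (((1 : ℝ), (0 : ℝ)) : ℝ × ℝ)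
  -- mixed derivative identity
  have hmix : (fderiv ℝ (fderiv ℝ γ) (t, s) (0, 1)) (1, 0)
      = fderiv ℝ u (t, γ (t, s)) (0, fderiv ℝ γ (t, s) (0, 1)) := by
    have h1 : HasDerivAt (fun σ => fderiv ℝ γ (t, σ) (1, 0))
        ((fderiv ℝ (fderiv ℝ γ) (t, s) (0, 1)) (1, 0)) s :=
      ((ContinuousLinearMap.apply ℝ (EuclideanSpace ℝ (Fin n))
        (((1 : ℝ), (0 : ℝ)) : ℝ × ℝ)).hasFDerivAt).comp_hasDerivAt s
        (hasDerivAt_slice_snd hΦd t s)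
    have h2 : HasDerivAt (fun σ => u (t, γ (t, σ)))
        (fderiv ℝ u (t, γ (t, s)) (0, fderiv ℝ γ (t, s) (0, 1))) s :=
      (hud _).hasFDerivAt.comp_hasDerivAt s hΓs
    have hfun : (fun σ => fderiv ℝ γ (t, σ) (1, 0)) = fun σ => u (t, γ (t, σ)) :=
      funext fun σ => htd t σ
    rw [hfun] at h1
    exact h1.unique h2
  -- components of fderiv of u
  have hproj : ∀ (j : Fin n) (z : ℝ × EuclideanSpace ℝ (Fin n)),
      fderiv ℝ u (t, γ (t, s)) z j = fderiv ℝ (fun p => u p j) (t, γ (t, s)) z := fun j z => by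
    have h := (((EuclideanSpace.proj (𝕜 := ℝ) j).hasFDerivAt
      (x := u (t, γ (t, s)))).comp (t, γ (t, s)) (hud _).hasFDerivAt).fderiv
    have : fderiv ℝ (fun p => u p j) (t, γ (t, s))
        = (EuclideanSpace.proj (𝕜 := ℝ) j).comp (fderiv ℝ u (t, γ (t, s))) := h
    rw [this]; rfl
  -- split the i-th component of the evolution equation
  have hAi : ∀ i : Fin n, fderiv ℝ (fun p => v p i) (t, γ (t, s)) (1, u (t, γ (t, s)))
      = sgrad (fun y => ψ (t, y)) (γ (t, s)) i - jacT u v t (γ (t, s)) i := fun i => by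
    have h1 : tdV v t (γ (t, s)) i = fderiv ℝ (fun p => v p i) (t, γ (t, s)) (1, 0) := by
      show deriv (fun τ => v (τ, γ (t, s)) i) t = _
      exact (hasDerivAt_slice_time (hvi i) t (γ (t, s))).deriv
    have h2 : advV u v t (γ (t, s)) i
        = fderiv ℝ (fun p => v p i) (t, γ (t, s)) (0, u (t, γ (t, s))) := by
      show fderiv ℝ (fun y => v (t, y) i) (γ (t, s)) (u (t, γ (t, s))) = _
      exact fderiv_slice_space (hvi i) t _ _
    have hsum : ((1 : ℝ), (0 : EuclideanSpace ℝ (Fin n))) + (0, u (t, γ (t, s)))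
        = ((1 : ℝ), u (t, γ (t, s))) := by simp
    have hcomp := congrArg (fun z : EuclideanSpace ℝ (Fin n) => z i) (heq t (γ (t, s)))
    simp only [PiLp.add_apply] at hcomp
    rw [← hsum, ContinuousLinearMap.map_add, ← h1, ← h2]
    linarith
  have hB' : ∀ i : Fin n, (fderiv ℝ (fderiv ℝ γ) (t, s) (1, 0)) (0, 1) i
      = fderiv ℝ (fun p => u p i) (t, γ (t, s)) (0, fderiv ℝ γ (t, s) (0, 1)) := fun i => by
    rw [← hsym, hmix]
    exact hproj i _
  have hsg : ∀ i : Fin n, sgrad (fun y => ψ (t, y)) (γ (t, s)) i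
      = fderiv ℝ ψ (t, γ (t, s)) (0, EuclideanSpace.single i 1) := fun i => by
    show fderiv ℝ (fun y => ψ (t, y)) (γ (t, s)) (EuclideanSpace.single i 1) = _
    exact fderiv_slice_space hψd t _ _
  have hjac : ∀ i : Fin n, jacT u v t (γ (t, s)) i
      = ∑ j, v (t, γ (t, s)) j
          * fderiv ℝ (fun p => u p j) (t, γ (t, s)) (0, EuclideanSpace.single i 1) := fun i => by
    show (∑ j, v (t, γ (t, s)) j * pd (fun y => u (t, y) j) (i) (γ (t, s))) = _
    refine Finset.sum_congr rfl fun j _ => ?_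
    congr 1
    show fderiv ℝ (fun y => u (t, y) j) (γ (t, s)) (EuclideanSpace.single i 1) = _
    exact fderiv_slice_space (huj j) t _ _
  have key : (∑ i, (fderiv ℝ (fun p => v p i) (t, γ (t, s)) (1, u (t, γ (t, s)))
          * fderiv ℝ γ (t, s) (0, 1) i
        + v (t, γ (t, s)) i * (fderiv ℝ (fderiv ℝ γ) (t, s) (1, 0)) (0, 1) i))
      = fderiv ℝ ψ (t, γ (t, s)) (0, fderiv ℝ γ (t, s) (0, 1)) := by
    simp only [hAi, hB', hsg, hjac, sub_mul, Finset.sum_add_distrib, Finset.sum_sub_distrib]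
    rw [clm_sum_single]
    have hswap : (∑ i, (∑ j, v (t, γ (t, s)) j
          * fderiv ℝ (fun p => u p j) (t, γ (t, s)) (0, EuclideanSpace.single i 1))
            * fderiv ℝ γ (t, s) (0, 1) i)
        = ∑ j, v (t, γ (t, s)) j
            * fderiv ℝ (fun p => u p j) (t, γ (t, s)) (0, fderiv ℝ γ (t, s) (0, 1)) := by
      simp only [Finset.sum_mul]
      rw [Finset.sum_comm]
      refine Finset.sum_congr rfl fun j _ => ?_
      simp only [mul_assoc, ← Finset.mul_sum]
      rw [clm_sum_single]
    rw [hswap]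
    ring
  rw [← key]
  exact hprod

lemma kelvin_sderiv
    (ψ : ℝ × EuclideanSpace ℝ (Fin n) → ℝ) (hψ : ContDiff ℝ (⊤ : ℕ∞) ψ)
    (γ : ℝ × ℝ → EuclideanSpace ℝ (Fin n)) (hγ : ContDiff ℝ (⊤ : ℕ∞) γ) (t s : ℝ) :
    HasDerivAt (fun σ => ψ (t, γ (t, σ)))
      (fderiv ℝ ψ (t, γ (t, s)) (0, fderiv ℝ γ (t, s) (0, 1))) s := by
  have hΓs : HasDerivAt (fun σ => ((t, γ (t, σ)) : ℝ × EuclideanSpace ℝ (Fin n)))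
      ((0 : ℝ), fderiv ℝ γ (t, s) (0, 1)) s :=
    (hasDerivAt_const s t).prodMk (hasDerivAt_slice_snd (hγ.differentiable (by simp)) t s)
  exact ((hψ.differentiable (by simp)) _).hasFDerivAt.comp_hasDerivAt s hΓs

end KelvinAux

/-- Kelvin circulation theorem for the Euler–Poincaré one-form evolution
`∂ₜv + (u·∇)v + (Ju)ᵀv = ∇ψ`: the circulation of `v` around a material loop
advected by `u` is constant in time. -/
theorem stmt6 (n : ℕ) (hn : 1 ≤ n)
    (u v : ℝ × EuclideanSpace ℝ (Fin n) → EuclideanSpace ℝ (Fin n))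
    (ψ : ℝ × EuclideanSpace ℝ (Fin n) → ℝ)
    (hu : ContDiff ℝ (⊤ : ℕ∞) u) (hv : ContDiff ℝ (⊤ : ℕ∞) v) (hψ : ContDiff ℝ (⊤ : ℕ∞) ψ)
    (heq : ∀ (t : ℝ) (x : EuclideanSpace ℝ (Fin n)),
      tdV v t x + advV u v t x + jacT u v t x = sgrad (fun y => ψ (t, y)) x)
    (γ : ℝ × ℝ → EuclideanSpace ℝ (Fin n)) (hγ : ContDiff ℝ (⊤ : ℕ∞) γ)
    (hper : ∀ t s, γ (t, s + 2 * Real.pi) = γ (t, s))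
    (hflow : ∀ t s, tdLoop γ t s = u (t, γ (t, s))) :
    ∀ t₁ t₂ : ℝ,
      (∫ s in (0 : ℝ)..(2 * Real.pi),
        (inner ℝ (v (t₁, γ (t₁, s))) (sdLoop γ t₁ s) : ℝ)) =
      ∫ s in (0 : ℝ)..(2 * Real.pi),
        (inner ℝ (v (t₂, γ (t₂, s))) (sdLoop γ t₂ s) : ℝ) := by
  have hγd : Differentiable ℝ γ := hγ.differentiable (by simp)
  -- the integrand and its t-derivative as continuous functions of (t, s)
  set G' : ℝ × ℝ → ℝ :=
    fun p => fderiv ℝ ψ (p.1, γ p) (0, fderiv ℝ γ p (0, 1)) with hG'def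
  have hcontΓ : Continuous fun p : ℝ × ℝ => ((p.1, γ p) : ℝ × EuclideanSpace ℝ (Fin n)) :=
    continuous_fst.prodMk hγ.continuous
  have hcontDγ : Continuous fun p : ℝ × ℝ => fderiv ℝ γ p (((0 : ℝ), (1 : ℝ)) : ℝ × ℝ) :=
    (hγ.continuous_fderiv (by simp)).clm_apply continuous_const
  have hcontG' : Continuous G' := by
    have h1 : Continuous fun p : ℝ × ℝ => fderiv ℝ ψ (p.1, γ p) :=
      (hψ.continuous_fderiv (by simp)).comp hcontΓ
    exact h1.clm_apply (continuous_const.prodMk hcontDγ)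
  have hcontF : Continuous fun p : ℝ × ℝ => (inner ℝ (v (p.1, γ p)) (sdLoop γ p.1 p.2) : ℝ) := by
    have : (fun p : ℝ × ℝ => (inner ℝ (v (p.1, γ p)) (sdLoop γ p.1 p.2) : ℝ))
        = fun p : ℝ × ℝ => (inner ℝ (v (p.1, γ p)) (fderiv ℝ γ p (0, 1)) : ℝ) := by
      funext p
      rw [show sdLoop γ p.1 p.2 = fderiv ℝ γ p (0, 1) from by
        rw [sdLoop_eq hγ]]
    rw [this]
    exact (hv.continuous.comp hcontΓ).inner hcontDγ
  -- the circulation has derivative zero everywhere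
  have hC : ∀ t₀ : ℝ, HasDerivAt
      (fun t => ∫ s in (0 : ℝ)..(2 * Real.pi),
        (inner ℝ (v (t, γ (t, s))) (sdLoop γ t s) : ℝ)) 0 t₀ := by
    intro t₀
    -- bound for the derivative on a compact neighbourhood
    obtain ⟨Cb, hCb⟩ := (IsCompact.exists_bound_of_continuousOn
      ((isCompact_Icc (a := t₀ - 1) (b := t₀ + 1)).prod
        (isCompact_uIcc (a := (0:ℝ)) (b := 2 * Real.pi)))
      hcontG'.continuousOn)
    have key := intervalIntegral.hasDerivAt_integral_of_dominated_loc_of_deriv_le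
      (F := fun t s => (inner ℝ (v (t, γ (t, s))) (sdLoop γ t s) : ℝ))
      (F' := fun t s => G' (t, s)) (x₀ := t₀) (a := (0:ℝ)) (b := 2 * Real.pi)
      (bound := fun _ => Cb) (μ := volume) (s := Metric.ball t₀ 1) (Metric.ball_mem_nhds t₀ one_pos)
      (Filter.Eventually.of_forall fun τ =>
        ((hcontF.comp (continuous_const.prodMk continuous_id)).aestronglyMeasurable))
      ((hcontF.comp (continuous_const.prodMk continuous_id)).intervalIntegrable _ _)
      ((hcontG'.comp (continuous_const.prodMk continuous_id)).aestronglyMeasurable)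
      (Filter.Eventually.of_forall fun s hs τ hτ => by
        refine hCb (τ, s) ⟨?_, ?_⟩
        · have : |τ - t₀| ≤ 1 := le_of_lt (by simpa [Metric.mem_ball, Real.dist_eq] using hτ)
          constructor <;> [linarith [abs_le.mp this |>.1]; linarith [abs_le.mp this |>.2]]
        · exact Set.mem_of_mem_of_subset hs Set.uIoc_subset_uIcc)
      (intervalIntegrable_const)
      (Filter.Eventually.of_forall fun s hs τ hτ =>
        kelvin_pointwise u v ψ hu hv hψ heq γ hγ hflow τ s)
    -- the integral of the derivative vanishes by periodicity
    have hzero : (∫ s in (0 : ℝ)..(2 * Real.pi), G' (t₀, s)) = 0 := by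
      have hftc := intervalIntegral.integral_eq_sub_of_hasDerivAt
        (f := fun σ => ψ (t₀, γ (t₀, σ))) (f' := fun s => G' (t₀, s))
        (a := (0:ℝ)) (b := 2 * Real.pi)
        (fun σ _ => kelvin_sderiv ψ hψ γ hγ t₀ σ)
        ((hcontG'.comp (continuous_const.prodMk continuous_id)).intervalIntegrable _ _)
      rw [hftc]
      have h2 := hper t₀ 0
      rw [zero_add] at h2
      show ψ (t₀, γ (t₀, 2 * Real.pi)) - ψ (t₀, γ (t₀, 0)) = 0
      rw [h2, sub_self]
    have := key.2
    rwa [hzero] at this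
  have hdiff : Differentiable ℝ (fun t => ∫ s in (0 : ℝ)..(2 * Real.pi),
      (inner ℝ (v (t, γ (t, s))) (sdLoop γ t s) : ℝ)) := fun t => (hC t).differentiableAt
  intro t₁ t₂
  exact is_const_of_deriv_eq_zero hdiff (fun t => (hC t).deriv) t₁ t₂
end

section
/- Let g, d ∈ ℝ, let b : ℝ² → ℝ be smooth, and let u : ℝ × ℝ² → ℝ² and D : ℝ × ℝ² → ℝ be smooth with D(t,x) > 0 for all (t,x), satisfying everywhere the 1L√D motion equation ∂_t u + (u·∇)u = −g ∇(D − b) − (d²/6) ∇( D^{−1/2} ∂_t²(√D) ), where ∇ denotes the spatial gradient. Define the vorticity ω := ∂u₂/∂x₁ − ∂u₁/∂x₂. Then for all (t,x): ∂_t ω + u·∇ω + ω (div u) = 0. In particular, if ω vanishes identically at some initial time and is transported along characteristics, curl-free (potential) flow is preserved. -/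
noncomputable section Helpers
abbrev E2 := EuclideanSpace ℝ (Fin 2)
abbrev P2 := ℝ × E2

def sv (i : Fin 2) : P2 := ((0:ℝ), EuclideanSpace.single i 1)
def tv : P2 := ((1:ℝ), 0)

lemma deriv_slice (f : P2 → ℝ) {t : ℝ} {x : E2} (hf : DifferentiableAt ℝ f (t, x)) :
    deriv (fun τ => f (τ, x)) t = fderiv ℝ f (t, x) tv :=
  (hf.hasFDerivAt.comp_hasDerivAt t ((hasDerivAt_id t).prodMk (hasDerivAt_const t x))).deriv

lemma fderiv_slice (f : P2 → ℝ) {t : ℝ} {x : E2} (hf : DifferentiableAt ℝ f (t, x)) (w : E2) :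
    fderiv ℝ (fun y => f (t, y)) x w = fderiv ℝ f (t, x) ((0:ℝ), w) := by
  have h : HasFDerivAt (fun y : E2 => (t, y))
      (((0 : E2 →L[ℝ] ℝ)).prod (ContinuousLinearMap.id ℝ E2)) x :=
    (hasFDerivAt_const t x).prodMk (hasFDerivAt_id x)
  have := (hf.hasFDerivAt.comp x h).fderiv
  rw [show (fun y => f (t, y)) = f ∘ (fun y : E2 => (t, y)) from rfl, this]
  simp

lemma contDiff_dapply (f : P2 → ℝ) (hf : ContDiff ℝ (⊤ : ℕ∞) f) (v : P2) :
    ContDiff ℝ (⊤ : ℕ∞) (fun p => fderiv ℝ f p v) :=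
  (hf.fderiv_right (by simp)).clm_apply contDiff_const

lemma swap2 (f : P2 → ℝ) (hf : ContDiff ℝ (⊤ : ℕ∞) f) (p : P2) (v w : P2) :
    fderiv ℝ (fun q => fderiv ℝ f q v) p w = fderiv ℝ (fun q => fderiv ℝ f q w) p v := by
  have hd : DifferentiableAt ℝ (fderiv ℝ f) p :=
    ((hf.fderiv_right (m := (⊤ : ℕ∞)) (by simp)).differentiable (by simp)).differentiableAt
  have key : ∀ a c : P2, fderiv ℝ (fun q => fderiv ℝ f q a) p c
      = fderiv ℝ (fderiv ℝ f) p c a := by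
    intro a c
    have := ((ContinuousLinearMap.apply ℝ ℝ a).hasFDerivAt.comp p hd.hasFDerivAt).fderiv
    calc fderiv ℝ (fun q => fderiv ℝ f q a) p c
        = fderiv ℝ ((ContinuousLinearMap.apply ℝ ℝ a) ∘ (fderiv ℝ f)) p c := rfl
      _ = fderiv ℝ (fderiv ℝ f) p c a := by rw [this]; rfl
  rw [key v w, key w v]
  exact (hf.contDiffAt.isSymmSndFDerivAt (by rw [minSmoothness_of_isRCLikeNormedField]; exact WithTop.coe_le_coe.2 le_top)) w v

lemma decomp (w : E2) : ((0:ℝ), w) = w 0 • sv 0 + w 1 • sv 1 := by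
  have hw : w = w 0 • EuclideanSpace.single (0:Fin 2) (1:ℝ)
      + w 1 • EuclideanSpace.single (1:Fin 2) (1:ℝ) := by
    ext i
    fin_cases i <;> simp [EuclideanSpace.single_apply]
  refine Prod.ext ?_ ?_
  · simp [sv]
  · simpa [sv] using hw

lemma clm_decomp (L : P2 →L[ℝ] ℝ) (w : E2) :
    L ((0:ℝ), w) = w 0 * L (sv 0) + w 1 * L (sv 1) := by
  rw [decomp w]; simp

def Sq (D : P2 → ℝ) : P2 → ℝ := fun p => Real.sqrt (D p)
def Sone (D : P2 → ℝ) : P2 → ℝ := fun p => fderiv ℝ (Sq D) p tv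
def Stwo (D : P2 → ℝ) : P2 → ℝ := fun p => fderiv ℝ (Sone D) p tv
def Psi (g dd : ℝ) (b : E2 → ℝ) (D : P2 → ℝ) : P2 → ℝ :=
  fun p => -(g * (D p - b p.2)) - dd * ((Sq D p)⁻¹ * Stwo D p)

lemma contDiff_Sq {D : P2 → ℝ} (hD : ContDiff ℝ (⊤ : ℕ∞) D) (hDpos : ∀ p, 0 < D p) :
    ContDiff ℝ (⊤ : ℕ∞) (Sq D) :=
  contDiff_iff_contDiffAt.2 fun p => hD.contDiffAt.sqrt (hDpos p).ne'

lemma contDiff_Psi {D : P2 → ℝ} (g dd : ℝ) {b : E2 → ℝ} (hb : ContDiff ℝ (⊤ : ℕ∞) b)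
    (hD : ContDiff ℝ (⊤ : ℕ∞) D) (hDpos : ∀ p, 0 < D p) :
    ContDiff ℝ (⊤ : ℕ∞) (Psi g dd b D) := by
  have hSq := contDiff_Sq hD hDpos
  have hS2 : ContDiff ℝ (⊤ : ℕ∞) (Stwo D) :=
    contDiff_dapply _ (contDiff_dapply _ hSq tv) tv
  have hinv : ContDiff ℝ (⊤ : ℕ∞) (fun p => (Sq D p)⁻¹) :=
    hSq.inv fun p => (Real.sqrt_pos.2 (hDpos p)).ne'
  exact ((contDiff_const.mul (hD.sub (hb.comp contDiff_snd))).neg).sub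
    (contDiff_const.mul (hinv.mul hS2))

end Helpers

open MeasureTheory
/-- The scalar vorticity `ω = ∂u₂/∂x₁ - ∂u₁/∂x₂` of a time-dependent 2D vector field. -/
noncomputable def vort (u : ℝ × EuclideanSpace ℝ (Fin 2) → EuclideanSpace ℝ (Fin 2))
    (t : ℝ) (x : EuclideanSpace ℝ (Fin 2)) : ℝ :=
  pd (fun y => u (t, y) 1) 0 x - pd (fun y => u (t, y) 0) 1 x

/-- For the 1L√D motion equation, whose right-hand side is a gradient, the 2D
vorticity `ω = curl u` satisfies the transport-stretching equation
`∂ₜω + u·∇ω + ω div u = 0`. -/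
theorem stmt9 (g d : ℝ) (b : EuclideanSpace ℝ (Fin 2) → ℝ) (hb : ContDiff ℝ (⊤ : ℕ∞) b)
    (u : ℝ × EuclideanSpace ℝ (Fin 2) → EuclideanSpace ℝ (Fin 2))
    (D : ℝ × EuclideanSpace ℝ (Fin 2) → ℝ)
    (hu : ContDiff ℝ (⊤ : ℕ∞) u) (hD : ContDiff ℝ (⊤ : ℕ∞) D) (hDpos : ∀ p, 0 < D p)
    (heq : ∀ (t : ℝ) (x : EuclideanSpace ℝ (Fin 2)),
      tdV u t x + advV u u t x =
        -(g • sgrad (fun y => D (t, y) - b y) x)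
        - (d ^ 2 / 6) • sgrad (fun y => (Real.sqrt (D (t, y)))⁻¹ *
            deriv (fun τ => deriv (fun σ => Real.sqrt (D (σ, y))) τ) t) x) :
    ∀ (t : ℝ) (x : EuclideanSpace ℝ (Fin 2)),
      deriv (fun τ => vort u τ x) t
        + fderiv ℝ (fun y => vort u t y) x (u (t, x))
        + vort u t x * sdiv (fun y => u (t, y)) x = 0 := by
  
  intro t x
  have hFc : ∀ i : Fin 2, ContDiff ℝ (⊤ : ℕ∞) (fun p : P2 => u p i) :=
    fun i => contDiff_euclidean.1 hu i
  have hSq := contDiff_Sq hD hDpos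
  have hS1 : ContDiff ℝ (⊤ : ℕ∞) (Sone D) := contDiff_dapply _ hSq tv
  have hS2 : ContDiff ℝ (⊤ : ℕ∞) (Stwo D) := contDiff_dapply _ hS1 tv
  have hPsi : ContDiff ℝ (⊤ : ℕ∞) (Psi g (d ^ 2 / 6) b D) := contDiff_Psi g (d ^ 2 / 6) hb hD hDpos
  have dFc : ∀ (i : Fin 2) (q : P2), DifferentiableAt ℝ (fun p : P2 => u p i) q :=
    fun i q => ((hFc i).differentiable (by simp)).differentiableAt
  have dd2 : ∀ (i : Fin 2) (v : P2) (q : P2),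
      DifferentiableAt ℝ (fun p : P2 => fderiv ℝ (fun r : P2 => u r i) p v) q :=
    fun i v q => ((contDiff_dapply _ (hFc i) v).differentiable (by simp)).differentiableAt
  -- the master pointwise identity obtained from the motion equation
  have master : ∀ (i : Fin 2) (q : P2),
      fderiv ℝ (fun p : P2 => u p i) q tv
      + u q 0 * fderiv ℝ (fun p : P2 => u p i) q (sv 0)
      + u q 1 * fderiv ℝ (fun p : P2 => u p i) q (sv 1)
      = fderiv ℝ (Psi g (d ^ 2 / 6) b D) q (sv i) := by
    intro i q
    obtain ⟨s, y⟩ := q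
    have hi := congrArg (fun v : E2 => v i) (heq s y)
    simp only [PiLp.add_apply, PiLp.sub_apply, PiLp.neg_apply, PiLp.smul_apply,
      smul_eq_mul, tdV, advV, sgrad, pd] at hi
    -- rewrite the second sgrad integrand
    have hfun : (fun y' : E2 => (Real.sqrt (D (s, y')))⁻¹ *
        deriv (fun τ => deriv (fun σ => Real.sqrt (D (σ, y'))) τ) s)
        = fun y' : E2 => (Sq D (s, y'))⁻¹ * Stwo D (s, y') := by
      funext y'
      have e1 : (fun τ => deriv (fun σ => Real.sqrt (D (σ, y'))) τ)
          = fun τ => Sone D (τ, y') := by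
        funext τ
        exact deriv_slice (Sq D) ((hSq.differentiable (by simp)).differentiableAt)
      rw [e1, deriv_slice (Sone D) ((hS1.differentiable (by simp)).differentiableAt)]
      rfl
    rw [hfun] at hi
    have hA : deriv (fun τ => u (τ, y) i) s
        = fderiv ℝ (fun p : P2 => u p i) (s, y) tv :=
      deriv_slice _ (dFc i _)
    have hB : fderiv ℝ (fun y' => u (s, y') i) y (u (s, y))
        = fderiv ℝ (fun p : P2 => u p i) (s, y) ((0:ℝ), u (s, y)) :=
      fderiv_slice _ (dFc i _) _
    rw [hA, hB, clm_decomp (fderiv ℝ (fun p : P2 => u p i) (s, y)) (u (s, y))] at hi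
    -- differentiability of the sliced scalar functions
    have hf1 : DifferentiableAt ℝ (fun y' : E2 => D (s, y') - b y') y :=
      (((hD.comp (contDiff_const.prodMk contDiff_id)).sub hb).differentiable (by simp)).differentiableAt
    have hPhi : ContDiff ℝ (⊤ : ℕ∞) (fun p : P2 => (Sq D p)⁻¹ * Stwo D p) :=
      (hSq.inv fun p => (Real.sqrt_pos.2 (hDpos p)).ne').mul hS2
    have hf2 : DifferentiableAt ℝ (fun y' : E2 => (Sq D (s, y'))⁻¹ * Stwo D (s, y')) y :=
      ((hPhi.comp (contDiff_const.prodMk contDiff_id)).differentiable (by simp)).differentiableAt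
    have H : HasFDerivAt (fun y' : E2 => Psi g (d ^ 2 / 6) b D (s, y'))
        (-(g • fderiv ℝ (fun y' : E2 => D (s, y') - b y') y)
          - (d ^ 2 / 6) • fderiv ℝ (fun y' : E2 => (Sq D (s, y'))⁻¹ * Stwo D (s, y')) y) y :=
      ((hf1.hasFDerivAt.const_mul g).neg).sub (hf2.hasFDerivAt.const_mul (d ^ 2 / 6))
    have key : fderiv ℝ (Psi g (d ^ 2 / 6) b D) (s, y) (sv i)
        = -(g * fderiv ℝ (fun y' : E2 => D (s, y') - b y') y (EuclideanSpace.single i 1))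
          - (d ^ 2 / 6) * fderiv ℝ (fun y' : E2 => (Sq D (s, y'))⁻¹ * Stwo D (s, y')) y
              (EuclideanSpace.single i 1) := by
      have h0 : fderiv ℝ (fun y' : E2 => Psi g (d ^ 2 / 6) b D (s, y')) y
            (EuclideanSpace.single i 1)
          = fderiv ℝ (Psi g (d ^ 2 / 6) b D) (s, y) (sv i) :=
        fderiv_slice _ ((hPsi.differentiable (by simp)).differentiableAt) _
      rw [← h0, H.fderiv]
      simp
    rw [key]
    linarith [hi]
  -- differentiate the master identity in an arbitrary direction
  have expand : ∀ (i : Fin 2) (v : P2),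
      fderiv ℝ (fun q : P2 => fderiv ℝ (fun p : P2 => u p i) q tv) (t, x) v
      + (u (t, x) 0 * fderiv ℝ (fun q : P2 => fderiv ℝ (fun p : P2 => u p i) q (sv 0)) (t, x) v
         + fderiv ℝ (fun p : P2 => u p i) (t, x) (sv 0)
           * fderiv ℝ (fun p : P2 => u p 0) (t, x) v)
      + (u (t, x) 1 * fderiv ℝ (fun q : P2 => fderiv ℝ (fun p : P2 => u p i) q (sv 1)) (t, x) v
         + fderiv ℝ (fun p : P2 => u p i) (t, x) (sv 1)
           * fderiv ℝ (fun p : P2 => u p 1) (t, x) v)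
      = fderiv ℝ (fun q : P2 => fderiv ℝ (Psi g (d ^ 2 / 6) b D) q (sv i)) (t, x) v := by
    intro i v
    have hfun : (fun q : P2 => fderiv ℝ (fun p : P2 => u p i) q tv
        + u q 0 * fderiv ℝ (fun p : P2 => u p i) q (sv 0)
        + u q 1 * fderiv ℝ (fun p : P2 => u p i) q (sv 1))
        = fun q : P2 => fderiv ℝ (Psi g (d ^ 2 / 6) b D) q (sv i) := funext (master i)
    have Htot : HasFDerivAt (fun q : P2 => fderiv ℝ (fun p : P2 => u p i) q tv
        + u q 0 * fderiv ℝ (fun p : P2 => u p i) q (sv 0)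
        + u q 1 * fderiv ℝ (fun p : P2 => u p i) q (sv 1))
        (fderiv ℝ (fun q : P2 => fderiv ℝ (fun p : P2 => u p i) q tv) (t, x)
          + (u (t, x) 0 • fderiv ℝ (fun q : P2 => fderiv ℝ (fun p : P2 => u p i) q (sv 0)) (t, x)
             + fderiv ℝ (fun p : P2 => u p i) (t, x) (sv 0)
               • fderiv ℝ (fun p : P2 => u p 0) (t, x))
          + (u (t, x) 1 • fderiv ℝ (fun q : P2 => fderiv ℝ (fun p : P2 => u p i) q (sv 1)) (t, x)
             + fderiv ℝ (fun p : P2 => u p i) (t, x) (sv 1)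
               • fderiv ℝ (fun p : P2 => u p 1) (t, x))) (t, x) :=
      ((dd2 i tv _).hasFDerivAt.add
        ((dFc 0 _).hasFDerivAt.mul (dd2 i (sv 0) _).hasFDerivAt)).add
        ((dFc 1 _).hasFDerivAt.mul (dd2 i (sv 1) _).hasFDerivAt)
    rw [hfun] at Htot
    rw [Htot.fderiv]
    simp [ContinuousLinearMap.add_apply, ContinuousLinearMap.smul_apply, smul_eq_mul]
  -- express the vorticity via full-space derivatives
  have hvort : ∀ (s : ℝ) (y : E2), vort u s y
      = fderiv ℝ (fun p : P2 => u p 1) (s, y) (sv 0)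
        - fderiv ℝ (fun p : P2 => u p 0) (s, y) (sv 1) := by
    intro s y
    have e1 : pd (fun y' => u (s, y') 1) 0 y
        = fderiv ℝ (fun p : P2 => u p 1) (s, y) (sv 0) := fderiv_slice _ (dFc 1 _) _
    have e2 : pd (fun y' => u (s, y') 0) 1 y
        = fderiv ℝ (fun p : P2 => u p 0) (s, y) (sv 1) := fderiv_slice _ (dFc 0 _) _
    unfold vort
    rw [e1, e2]
  have hWsm : ContDiff ℝ (⊤ : ℕ∞) (fun q : P2 => fderiv ℝ (fun p : P2 => u p 1) q (sv 0)
      - fderiv ℝ (fun p : P2 => u p 0) q (sv 1)) :=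
    (contDiff_dapply _ (hFc 1) (sv 0)).sub (contDiff_dapply _ (hFc 0) (sv 1))
  have hWfd : ∀ v : P2, fderiv ℝ (fun q : P2 => fderiv ℝ (fun p : P2 => u p 1) q (sv 0)
        - fderiv ℝ (fun p : P2 => u p 0) q (sv 1)) (t, x) v
      = fderiv ℝ (fun q : P2 => fderiv ℝ (fun p : P2 => u p 1) q (sv 0)) (t, x) v
        - fderiv ℝ (fun q : P2 => fderiv ℝ (fun p : P2 => u p 0) q (sv 1)) (t, x) v := by
    intro v
    have H : HasFDerivAt (fun q : P2 => fderiv ℝ (fun p : P2 => u p 1) q (sv 0)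
        - fderiv ℝ (fun p : P2 => u p 0) q (sv 1))
        (fderiv ℝ (fun q : P2 => fderiv ℝ (fun p : P2 => u p 1) q (sv 0)) (t, x)
          - fderiv ℝ (fun q : P2 => fderiv ℝ (fun p : P2 => u p 0) q (sv 1)) (t, x)) (t, x) :=
      (dd2 1 (sv 0) _).hasFDerivAt.sub (dd2 0 (sv 1) _).hasFDerivAt
    rw [H.fderiv]
    simp
  -- term 1
  have hT1 : deriv (fun τ => vort u τ x) t
      = fderiv ℝ (fun q : P2 => fderiv ℝ (fun p : P2 => u p 1) q (sv 0)
          - fderiv ℝ (fun p : P2 => u p 0) q (sv 1)) (t, x) tv := by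
    have e : (fun τ => vort u τ x) = fun τ => (fun q : P2 =>
        fderiv ℝ (fun p : P2 => u p 1) q (sv 0)
        - fderiv ℝ (fun p : P2 => u p 0) q (sv 1)) (τ, x) :=
      funext fun τ => hvort τ x
    rw [e]
    exact deriv_slice _ ((hWsm.differentiable (by simp)).differentiableAt)
  -- term 2
  have hT2 : fderiv ℝ (fun y => vort u t y) x (u (t, x))
      = fderiv ℝ (fun q : P2 => fderiv ℝ (fun p : P2 => u p 1) q (sv 0)
          - fderiv ℝ (fun p : P2 => u p 0) q (sv 1)) (t, x) ((0:ℝ), u (t, x)) := by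
    have e : (fun y => vort u t y) = fun y => (fun q : P2 =>
        fderiv ℝ (fun p : P2 => u p 1) q (sv 0)
        - fderiv ℝ (fun p : P2 => u p 0) q (sv 1)) (t, y) :=
      funext fun y => hvort t y
    rw [e]
    exact fderiv_slice _ ((hWsm.differentiable (by simp)).differentiableAt) _
  -- term 3 pieces
  have hsdiv : sdiv (fun y => u (t, y)) x
      = fderiv ℝ (fun p : P2 => u p 0) (t, x) (sv 0)
        + fderiv ℝ (fun p : P2 => u p 1) (t, x) (sv 1) := by
    have e1 : pd (fun y => u (t, y) 0) 0 x
        = fderiv ℝ (fun p : P2 => u p 0) (t, x) (sv 0) := fderiv_slice _ (dFc 0 _) _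
    have e2 : pd (fun y => u (t, y) 1) 1 x
        = fderiv ℝ (fun p : P2 => u p 1) (t, x) (sv 1) := fderiv_slice _ (dFc 1 _) _
    unfold sdiv
    rw [Fin.sum_univ_two, e1, e2]
  rw [hT1, hT2, hvort t x, hsdiv,
    clm_decomp (fderiv ℝ (fun q : P2 => fderiv ℝ (fun p : P2 => u p 1) q (sv 0)
      - fderiv ℝ (fun p : P2 => u p 0) q (sv 1)) (t, x)) (u (t, x)),
    hWfd tv, hWfd (sv 0), hWfd (sv 1)]
  -- swap mixed second derivatives so that atoms match the expanded master identity
  rw [swap2 _ (hFc 1) (t, x) (sv 0) tv, swap2 _ (hFc 0) (t, x) (sv 1) tv,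
    swap2 _ (hFc 1) (t, x) (sv 0) (sv 1), swap2 _ (hFc 0) (t, x) (sv 1) (sv 0)]
  have h1 := expand 1 (sv 0)
  have h2 := expand 0 (sv 1)
  rw [swap2 _ hPsi (t, x) (sv 1) (sv 0)] at h1
  linear_combination h1 - h2
end
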